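/- Suppose A, D, B and A', D', B' give two decompositions of the same U ∈ SU(d), with A, A', B, B' real orthogonal and D, D' diagonal unitary. Then the multiset of squared diagonal entries of D equals that of D': there is a permutation matrix P with D'² = P D² Pᵀ. -/

import Mathlib

/-!
Since `A` is orthogonal and `D` is symmetric, `Uᵀ U = B D² Bᵀ`, and likewise
`Uᵀ U = B' D'² B'ᵀ`. Conjugation by an orthogonal matrix preserves the characteristic
polynomial, so the diagonal matrices `D²` and `D'²` have the same characteristic polynomial,
hence the same multiset of diagonal entries (its roots).
-/

open Matrix Polynomial

theorem Equiv.Perm.exists_of_map_univ_eq {ι α : Type*} [Fintype ι] {f g : ι → α}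
    (h : Finset.univ.val.map g = Finset.univ.val.map f) :
    ∃ σ : Equiv.Perm ι, ∀ k, g k = f (σ k) := by
  classical
  have hfiber : ∀ c, Fintype.card {k // g k = c} = Fintype.card {k // f k = c} := by
    intro c
    simpa [Fintype.card_subtype, Finset.card_def, Finset.filter_val, Multiset.count_map,
      eq_comm] using congrArg (Multiset.count c) h
  exact ⟨Equiv.ofFiberEquiv fun c => Fintype.equivOfCardEq (hfiber c),
    fun k => (Equiv.ofFiberEquiv_map _ k).symm⟩

namespace Matrix

variable {n R : Type*} [Fintype n]

theorem IsDiag.mul [Semiring R] {M N : Matrix n n R} (hM : M.IsDiag) (hN : N.IsDiag) :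
    (M * N).IsDiag := by
  classical
  rw [← hM.diagonal_diag, ← hN.diagonal_diag, diagonal_mul_diagonal]
  exact isDiag_diagonal _

theorem map_mem_orthogonalGroup {S : Type*} [CommRing R] [CommRing S] [DecidableEq n]
    (f : R →+* S) {A : Matrix n n R} (hA : A ∈ orthogonalGroup n R) :
    A.map f ∈ orthogonalGroup n S := by
  rw [mem_orthogonalGroup_iff] at hA ⊢
  rw [← transpose_map, ← Matrix.map_mul, hA, Matrix.map_one f f.map_zero f.map_one]

theorem transpose_mul_self_of_orthogonal_mul_symm_mul [CommRing R] [DecidableEq n]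
    {A D : Matrix n n R} (hA : A ∈ orthogonalGroup n R) (hD : Dᵀ = D) (B : Matrix n n R) :
    (A * D * Bᵀ)ᵀ * (A * D * Bᵀ) = B * (D * D) * Bᵀ := by
  rw [mem_orthogonalGroup_iff'] at hA
  simp only [transpose_mul, transpose_transpose, hD, Matrix.mul_assoc]
  rw [← Matrix.mul_assoc Aᵀ, hA, Matrix.one_mul]

theorem charpoly_orthogonal_conj [CommRing R] [DecidableEq n] {B : Matrix n n R}
    (hB : B ∈ orthogonalGroup n R) (M : Matrix n n R) :
    (B * M * Bᵀ).charpoly = M.charpoly := by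
  rw [mem_orthogonalGroup_iff'] at hB
  rw [charpoly_mul_comm, ← Matrix.mul_assoc, hB, Matrix.one_mul]

theorem IsDiag.roots_charpoly [CommRing R] [IsDomain R] [DecidableEq n] {M : Matrix n n R}
    (hM : M.IsDiag) : M.charpoly.roots = Finset.univ.val.map fun k => M k k := by
  rw [← hM.diagonal_diag, charpoly_diagonal,
    roots_prod _ _ (Finset.prod_ne_zero_iff.mpr fun k _ => X_sub_C_ne_zero _)]
  simp

theorem IsDiag.exists_perm_diag_eq_of_charpoly_eq [CommRing R] [IsDomain R] [DecidableEq n]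
    {M N : Matrix n n R} (hM : M.IsDiag) (hN : N.IsDiag) (h : N.charpoly = M.charpoly) :
    ∃ σ : Equiv.Perm n, ∀ k, N k k = M (σ k) (σ k) :=
  Equiv.Perm.exists_of_map_univ_eq (hM.roots_charpoly ▸ hN.roots_charpoly ▸ congrArg roots h)

end Matrix

theorem kak_middle_factor_unique_up_to_permutation_general {d : ℕ}
    (U D D' : Matrix (Fin d) (Fin d) ℂ) (A B A' B' : Matrix (Fin d) (Fin d) ℝ)
    (hA : A ∈ Matrix.orthogonalGroup (Fin d) ℝ)
    (hB : B ∈ Matrix.orthogonalGroup (Fin d) ℝ)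
    (hA' : A' ∈ Matrix.orthogonalGroup (Fin d) ℝ)
    (hB' : B' ∈ Matrix.orthogonalGroup (Fin d) ℝ)
    (hD : D.IsDiag)
    (hD' : D'.IsDiag)
    (hU : U = (A.map Complex.ofReal) * D * (B.map Complex.ofReal)ᵀ)
    (hU' : U = (A'.map Complex.ofReal) * D' * (B'.map Complex.ofReal)ᵀ) :
    ∃ σ : Equiv.Perm (Fin d), ∀ k, (D' * D') k k = (D * D) (σ k) (σ k) := by
  have hc : ∀ {M : Matrix (Fin d) (Fin d) ℝ}, M ∈ orthogonalGroup (Fin d) ℝ →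
      M.map Complex.ofReal ∈ orthogonalGroup (Fin d) ℂ :=
    map_mem_orthogonalGroup Complex.ofRealHom
  have hUU : Uᵀ * U = B.map Complex.ofReal * (D * D) * (B.map Complex.ofReal)ᵀ := by
    rw [hU]; exact transpose_mul_self_of_orthogonal_mul_symm_mul (hc hA) hD.isSymm _
  have hUU' : Uᵀ * U = B'.map Complex.ofReal * (D' * D') * (B'.map Complex.ofReal)ᵀ := by
    rw [hU']; exact transpose_mul_self_of_orthogonal_mul_symm_mul (hc hA') hD'.isSymm _
  have hcharpoly : (D' * D').charpoly = (D * D).charpoly := by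
    rw [← charpoly_orthogonal_conj (hc hB') (D' * D'), ← hUU', hUU,
      charpoly_orthogonal_conj (hc hB)]
  exact (hD.mul hD).exists_perm_diag_eq_of_charpoly_eq (hD'.mul hD') hcharpoly

/-- If U = A D Bᵀ = A' D' B'ᵀ with A, B, A', B' real orthogonal and D, D' diagonal
unitary, then the multisets of squared diagonal entries of D and D' coincide:
D'² equals D² up to a permutation of the diagonal. -/
theorem kak_middle_factor_unique_up_to_permutation {d : ℕ}
    (U D D' : Matrix (Fin d) (Fin d) ℂ) (A B A' B' : Matrix (Fin d) (Fin d) ℝ)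
    (hA : A ∈ Matrix.orthogonalGroup (Fin d) ℝ)
    (hB : B ∈ Matrix.orthogonalGroup (Fin d) ℝ)
    (hA' : A' ∈ Matrix.orthogonalGroup (Fin d) ℝ)
    (hB' : B' ∈ Matrix.orthogonalGroup (Fin d) ℝ)
    (hD : D.IsDiag) (hDu : D ∈ Matrix.unitaryGroup (Fin d) ℂ)
    (hD' : D'.IsDiag) (hD'u : D' ∈ Matrix.unitaryGroup (Fin d) ℂ)
    (hU : U = (A.map Complex.ofReal) * D * (B.map Complex.ofReal)ᵀ)
    (hU' : U = (A'.map Complex.ofReal) * D' * (B'.map Complex.ofReal)ᵀ) :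
    ∃ σ : Equiv.Perm (Fin d), ∀ k, (D' * D') k k = (D * D) (σ k) (σ k) :=
  kak_middle_factor_unique_up_to_permutation_general U D D' A B A' B' hA hB hA' hB' hD hD' hU hU'
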